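/- Let X be a real Banach space, let K ⊆ X be closed and nonempty, let x ∈ X \ K, and let x̄ ∈ K be a nearest point to x in K, i.e., ‖x − x̄‖ = d_K(x). If the norm of X is Gateaux differentiable at x − x̄ and d_K⁻(x; x − x̄) = d_K(x), then d_K is Gateaux differentiable at x. -/

import Mathlib

/-!
Write `v = x - x̄` and let `f` be the Gateaux derivative of the norm at `v`. Because
`d_K ≤ ‖· - x̄‖` with equality at `x`, the right difference quotients of `d_K` at `x` in a
direction `y` are bounded above by those of the norm at `v`, which tend to `f y`.
For the lower bound, fix `h > 0` and compare `x + t • y` with `x + (t / h) • v`: since `d_K` is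
`1`-Lipschitz, `d_K (x + t • y) ≥ d_K (x + (t / h) • v) - (t / h) * ‖v - h • y‖`. The liminf
hypothesis bounds the first term below by `d_K x + (t / h) * (‖v‖ - o(1))` as `t → 0⁺`, and
differentiability of the norm gives `‖v - h • y‖ ≤ ‖v‖ - h * f y + o(h)`. Letting `t → 0⁺` and
then `h → 0⁺` shows that the right derivative in every direction is `f y`; replacing `y` by `-y`
handles `t → 0⁻`.
-/

open Filter Topology

/-- A function `f : X → ℝ` is Gateaux differentiable at `x` with Gateaux derivative the
continuous linear functional `A` if for every `y`, `(f (x + t y) - f x)/t → A y` as `t → 0`. -/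
def GateauxDiffAt {X : Type*} [NormedAddCommGroup X] [NormedSpace ℝ X]
    (f : X → ℝ) (x : X) (A : X →L[ℝ] ℝ) : Prop :=
  ∀ y : X, Tendsto (fun t : ℝ => (f (x + t • y) - f x) / t) (𝓝[≠] 0) (𝓝 (A y))

open scoped NNReal

section

variable {X : Type*} [NormedAddCommGroup X] [NormedSpace ℝ X]

noncomputable def diffQuot (φ : X → ℝ) (x y : X) (t : ℝ) : ℝ :=
  (φ (x + t • y) - φ x) / t

lemma diffQuot_neg_neg (φ : X → ℝ) (x y : X) (t : ℝ) :
    diffQuot φ x (-y) (-t) = -diffQuot φ x y t := by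
  simp only [diffQuot, neg_smul, smul_neg, neg_neg, div_neg]

lemma gateauxDiffAt_iff_forall_tendsto_nhdsGT {φ : X → ℝ} {x : X} {A : X →L[ℝ] ℝ} :
    GateauxDiffAt φ x A ↔ ∀ y, Tendsto (diffQuot φ x y) (𝓝[>] 0) (𝓝 (A y)) := by
  refine ⟨fun h y => (h y).mono_left (nhdsGT_le_nhdsNE 0), fun h y => ?_⟩
  have hleft : Tendsto (diffQuot φ x y) (𝓝[<] 0) (𝓝 (A y)) := by
    have := ((h (-y)).comp (neg_zero (G := ℝ) ▸ tendsto_neg_nhdsLT)).neg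
    simpa only [Function.comp_def, diffQuot_neg_neg, neg_neg, map_neg] using this
  show Tendsto (diffQuot φ x y) (𝓝[≠] 0) (𝓝 (A y))
  rw [← nhdsLT_sup_nhdsGT]
  exact tendsto_sup.2 ⟨hleft, h y⟩

lemma LipschitzWith.abs_diffQuot_le {K : ℝ≥0} {φ : X → ℝ} (hφ : LipschitzWith K φ)
    (x y : X) (t : ℝ) : |diffQuot φ x y t| ≤ K * ‖y‖ := by
  rcases eq_or_ne t 0 with rfl | ht
  · simp only [diffQuot, div_zero, abs_zero]
    positivity
  have := hφ.dist_le_mul (x + t • y) x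
  rw [Real.dist_eq, dist_eq_norm, add_sub_cancel_left, norm_smul, Real.norm_eq_abs] at this
  rw [diffQuot, abs_div, div_le_iff₀ (abs_pos.2 ht)]
  linarith

lemma LipschitzWith.isBoundedUnder_ge_diffQuot {K : ℝ≥0} {φ : X → ℝ} (hφ : LipschitzWith K φ)
    (x y : X) (l : Filter ℝ) : IsBoundedUnder (· ≥ ·) l (diffQuot φ x y) :=
  isBoundedUnder_of_eventually_ge (a := -(K * ‖y‖)) <|
    Eventually.of_forall fun t => neg_le_of_abs_le (hφ.abs_diffQuot_le x y t)

lemma LipschitzWith.eventually_lt_diffQuot {φ : X → ℝ} (hφ : LipschitzWith 1 φ) {x v : X}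
    {A : X →L[ℝ] ℝ} (hA : GateauxDiffAt (fun y => ‖y‖) v A)
    (hdini : ‖v‖ ≤ liminf (diffQuot φ x v) (𝓝[>] 0)) (y : X) {a : ℝ} (ha : a < A y) :
    ∀ᶠ t in 𝓝[>] 0, a < diffQuot φ x y t := by
  -- The margin `A y - a` is split evenly between the error of the norm's quotient at scale `h`
  -- and that of the liminf hypothesis at scale `s = t / h`.
  obtain ⟨h, hnorm, hh⟩ : ∃ h, ‖v + h • -y‖ - ‖v‖ < h * ((A y - a) / 2 - A y) ∧ 0 < h := by
    have hlim := gateauxDiffAt_iff_forall_tendsto_nhdsGT.1 hA (-y)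
    obtain ⟨h, hlt, hh : 0 < h⟩ := ((tendsto_order.1 hlim).2 ((A y - a) / 2 - A y)
      (by simp only [map_neg]; linarith) |>.and self_mem_nhdsWithin).exists
    rw [diffQuot, div_lt_iff₀ hh, mul_comm] at hlt
    exact ⟨h, hlt, hh⟩
  have hdini' : ∀ᶠ s in 𝓝[>] 0, ‖v‖ - h * (A y - a) / 2 < diffQuot φ x v s :=
    eventually_lt_of_lt_liminf (by linarith [mul_pos hh (sub_pos.2 ha)])
      (hφ.isBoundedUnder_ge_diffQuot x v _)
  filter_upwards [eventually_nhdsGT_zero_mul_left (inv_pos.2 hh) hdini', self_mem_nhdsWithin]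
    with t hs (ht : 0 < t)
  obtain ⟨s, rfl⟩ : ∃ s, t = h * s := ⟨h⁻¹ * t, (mul_inv_cancel_left₀ hh.ne' t).symm⟩
  rw [inv_mul_cancel_left₀ hh.ne'] at hs
  have hs_pos : 0 < s := pos_of_mul_pos_right ht hh.le
  have hlip : φ (x + s • v) - φ (x + (h * s) • y) ≤ s * ‖v + h • -y‖ := by
    have hdiff : x + s • v - (x + (h * s) • y) = s • (v + h • -y) := by module
    calc φ (x + s • v) - φ (x + (h * s) • y)
        ≤ dist (φ (x + s • v)) (φ (x + (h * s) • y)) := le_abs_self _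
      _ ≤ dist (x + s • v) (x + (h * s) • y) := by
        simpa only [NNReal.coe_one, one_mul] using hφ.dist_le_mul _ _
      _ = s * ‖v + h • -y‖ := by
        rw [dist_eq_norm, hdiff, norm_smul, Real.norm_eq_abs, abs_of_pos hs_pos]
  rw [diffQuot, lt_div_iff₀ hs_pos] at hs
  rw [diffQuot, lt_div_iff₀ ht]
  linarith [mul_lt_mul_of_pos_left hnorm hs_pos]

theorem LipschitzWith.gateauxDiffAt_of_le_norm_sub {φ : X → ℝ} (hφ : LipschitzWith 1 φ)
    {x xbar : X} (hle : ∀ z, φ z ≤ ‖z - xbar‖) (hx : φ x = ‖x - xbar‖) {A : X →L[ℝ] ℝ}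
    (hA : GateauxDiffAt (fun y => ‖y‖) (x - xbar) A)
    (hdini : ‖x - xbar‖ ≤ liminf (diffQuot φ x (x - xbar)) (𝓝[>] 0)) :
    GateauxDiffAt φ x A := by
  refine gateauxDiffAt_iff_forall_tendsto_nhdsGT.2 fun y => tendsto_order.2
    ⟨fun a ha => hφ.eventually_lt_diffQuot hA hdini y ha, fun b hb => ?_⟩
  have hnorm := gateauxDiffAt_iff_forall_tendsto_nhdsGT.1 hA y
  filter_upwards [(tendsto_order.1 hnorm).2 b hb, self_mem_nhdsWithin] with t hlt (ht : 0 < t)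
  refine lt_of_le_of_lt (div_le_div_of_nonneg_right ?_ ht.le) hlt
  rw [hx, ← add_sub_right_comm]
  exact sub_le_sub_right (hle _) _

end

theorem distance_gateauxDiffAt_of_liminf_general {X : Type*} [NormedAddCommGroup X]
    [NormedSpace ℝ X] (K : Set X)
    (x : X) (xbar : X) (hxbar : xbar ∈ K)
    (hnear : ‖x - xbar‖ = Metric.infDist x K)
    (hnorm : ∃ f : X →L[ℝ] ℝ, GateauxDiffAt (fun y : X => ‖y‖) (x - xbar) f)
    (hliminf : liminf
      (fun t : ℝ => (Metric.infDist (x + t • (x - xbar)) K - Metric.infDist x K) / t)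
      (𝓝[>] 0) = Metric.infDist x K) :
    ∃ A : X →L[ℝ] ℝ, GateauxDiffAt (fun y : X => Metric.infDist y K) x A := by
  obtain ⟨A, hA⟩ := hnorm
  refine ⟨A, (Metric.lipschitz_infDist_pt K).gateauxDiffAt_of_le_norm_sub (fun z => ?_)
    hnear.symm hA (hnear ▸ hliminf.ge)⟩
  rw [← dist_eq_norm]
  exact Metric.infDist_le_dist_of_mem hxbar

/-- Let `K ⊆ X` be closed and nonempty, `x ∉ K`, and `x̄ ∈ K` a nearest point to `x` in `K`.
If the norm of `X` is Gateaux differentiable at `x - x̄` and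
`d_K⁻(x; x - x̄) = liminf_{t→0⁺} (d_K(x + t(x - x̄)) - d_K(x))/t = d_K(x)`,
then `d_K` is Gateaux differentiable at `x`. -/
theorem distance_gateauxDiffAt_of_liminf {X : Type*} [NormedAddCommGroup X]
    [NormedSpace ℝ X] [CompleteSpace X] (K : Set X) (hKc : IsClosed K) (hKne : K.Nonempty)
    (x : X) (hx : x ∉ K) (xbar : X) (hxbar : xbar ∈ K)
    (hnear : ‖x - xbar‖ = Metric.infDist x K)
    (hnorm : ∃ f : X →L[ℝ] ℝ, GateauxDiffAt (fun y : X => ‖y‖) (x - xbar) f)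
    (hliminf : liminf
      (fun t : ℝ => (Metric.infDist (x + t • (x - xbar)) K - Metric.infDist x K) / t)
      (𝓝[>] 0) = Metric.infDist x K) :
    ∃ A : X →L[ℝ] ℝ, GateauxDiffAt (fun y : X => Metric.infDist y K) x A :=
  distance_gateauxDiffAt_of_liminf_general K x xbar hxbar hnear hnorm hliminf
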